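/- Let G be a connected simple graph and let F be a spanning tree of G. A vertex y is a cutvertex of G if and only if there exist two distinct vertices x and z that are both adjacent to y in F and are not biconnected in G. -/

import Mathlib

/-- Two vertices `a` and `b` of a simple graph `H` are *biconnected* in `H` if `a ≠ b` and
there exist two distinct paths from `a` to `b` in `H` whose only common vertices are
`a` and `b`. -/
def Biconnected {V : Type*} (H : SimpleGraph V) (a b : V) : Prop :=
  a ≠ b ∧ ∃ p q : H.Path a b, p ≠ q ∧
    ∀ x, x ∈ p.1.support → x ∈ q.1.support → (x = a ∨ x = b)

/-- The graph obtained from `H` by deleting the vertex `c` and all edges incident to it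
(keeping the same vertex type). -/
def removeVertex {V : Type*} (H : SimpleGraph V) (c : V) : SimpleGraph V where
  Adj a b := H.Adj a b ∧ a ≠ c ∧ b ≠ c
  symm := by
    constructor
    intro a b h
    exact ⟨h.1.symm, h.2.2, h.2.1⟩
  loopless := by
    constructor
    intro a h
    exact (H.ne_of_adj h.1) rfl

/-- A vertex `c` of a graph `H` is a *cutvertex* if there exist vertices `a, b ≠ c` that
are connected in `H` but not in the graph obtained from `H` by deleting `c`. -/
def IsCutVertex {V : Type*} (H : SimpleGraph V) (c : V) : Prop :=
  ∃ a b : V, a ≠ c ∧ b ≠ c ∧ H.Reachable a b ∧ ¬ (removeVertex H c).Reachable a b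

/-!
Walk along the tree path from `a` to `b`. If it avoids `y`, then `a` and `b` stay connected
in `G - y`; otherwise `y` is an interior vertex of it, with tree neighbours `x` before and `z`
after it, and `a` reaches `x` and `z` reaches `b` in `G - y`. So `y` separates `a` from `b`
exactly when it separates some such `x` from `z`. Finally, for two distinct neighbours `x, z`
of `y`, being biconnected is the same as being connected in `G - y`: the path `x y z` together
with a path avoiding `y` are two internally disjoint paths, and of any two internally disjoint
paths from `x` to `z` one avoids `y`.
-/

open SimpleGraph

section

variable {V : Type*} {G H : SimpleGraph V}

lemma removeVertex_le (c : V) : removeVertex G c ≤ G := fun _ _ h => h.1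

lemma removeVertex_mono (h : H ≤ G) (c : V) : removeVertex H c ≤ removeVertex G c :=
  fun _ _ hadj => ⟨h hadj.1, hadj.2⟩

namespace SimpleGraph.Walk

lemma reachable_removeVertex {c u v : V} (w : G.Walk u v) (hc : c ∉ w.support) :
    (removeVertex G c).Reachable u v := by
  induction w with
  | nil => rfl
  | cons h w ih =>
    simp only [support_cons, List.mem_cons, not_or] at hc
    have hadj : (removeVertex G c).Adj _ _ :=
      ⟨h, Ne.symm hc.1, fun hv => hc.2 (hv ▸ w.start_mem_support)⟩
    exact hadj.reachable.trans (ih hc.2)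

lemma notMem_support_of_removeVertex {c u v : V} (w : (removeVertex G c).Walk u v)
    (hu : u ≠ c) : c ∉ w.support := by
  induction w with
  | nil => simpa using hu.symm
  | cons h w ih =>
    simp only [support_cons, List.mem_cons, not_or]
    exact ⟨hu.symm, ih h.2.2⟩

end SimpleGraph.Walk

lemma reachable_removeVertex_iff {c u v : V} (hu : u ≠ c) :
    (removeVertex G c).Reachable u v ↔ ∃ w : G.Walk u v, c ∉ w.support := by
  refine ⟨fun ⟨w⟩ => ⟨w.mapLe (removeVertex_le c), ?_⟩,
    fun ⟨w, hw⟩ => w.reachable_removeVertex hw⟩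
  rw [Walk.support_mapLe_eq_support]
  exact w.notMem_support_of_removeVertex hu

lemma Biconnected.exists_walk_notMem_support {a b c : V} (h : Biconnected G a b)
    (ha : c ≠ a) (hb : c ≠ b) : ∃ w : G.Walk a b, c ∉ w.support := by
  obtain ⟨-, p, q, -, hpq⟩ := h
  by_cases hcp : c ∈ p.1.support
  · refine ⟨q, fun hcq => ?_⟩
    rcases hpq c hcp hcq with rfl | rfl
    exacts [ha rfl, hb rfl]
  · exact ⟨p, hcp⟩

lemma biconnected_of_adj_of_walk {x y z : V} (hxy : G.Adj x y) (hyz : G.Adj y z) (hxz : x ≠ z)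
    (w : G.Walk x z) (hy : y ∉ w.support) : Biconnected G x z := by
  classical
  have hxyz : (Walk.cons hxy (Walk.cons hyz Walk.nil)).IsPath := by
    simp [hxy.ne, hyz.ne, hxz]
  refine ⟨hxz, w.toPath, ⟨_, hxyz⟩, fun h => ?_, fun v hvw hv => ?_⟩
  · exact hy (w.support_toPath_subset_support (h ▸ by simp))
  · simp only [Walk.support_cons, Walk.support_nil, List.mem_cons, List.not_mem_nil,
      or_false] at hv
    rcases hv with rfl | rfl | rfl
    · exact .inl rfl
    · exact absurd (w.support_toPath_subset_support hvw) hy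
    · exact .inr rfl

lemma biconnected_iff_reachable_removeVertex {x y z : V} (hxy : G.Adj x y) (hyz : G.Adj y z)
    (hxz : x ≠ z) : Biconnected G x z ↔ (removeVertex G y).Reachable x z := by
  rw [reachable_removeVertex_iff hxy.ne]
  exact ⟨fun h => h.exists_walk_notMem_support hxy.ne.symm hyz.ne,
    fun ⟨w, hw⟩ => biconnected_of_adj_of_walk hxy hyz hxz w hw⟩

lemma SimpleGraph.Walk.IsPath.exists_adj_adj_of_mem_support {a b y : V} {p : G.Walk a b}
    (hp : p.IsPath) (hy : y ∈ p.support) (ha : a ≠ y) (hb : b ≠ y) :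
    ∃ x z, x ≠ z ∧ G.Adj y x ∧ G.Adj y z ∧
      (removeVertex G y).Reachable a x ∧ (removeVertex G y).Reachable z b := by
  classical
  obtain ⟨x, hyx, w₁, ht⟩ := (p.takeUntil y hy).reverse.exists_eq_cons_of_ne ha.symm
  obtain ⟨z, hyz, w₂, hd⟩ := (p.dropUntil y hy).exists_eq_cons_of_ne hb.symm
  have hyw₁ : y ∉ w₁.support :=
    ((Walk.cons_isPath_iff _ _).1 (ht ▸ (hp.takeUntil hy).reverse)).2
  have hyw₂ : y ∉ w₂.support := ((Walk.cons_isPath_iff _ _).1 (hd ▸ hp.dropUntil hy)).2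
  have hxz : x ≠ z := by
    have hnd := hp.support_nodup
    rw [← p.take_spec hy, Walk.support_append, hd, Walk.support_cons, List.tail_cons,
      List.nodup_append] at hnd
    have hx : x ∈ (p.takeUntil y hy).reverse.support := by
      rw [ht]
      simp
    rw [Walk.support_reverse, List.mem_reverse] at hx
    exact hnd.2.2 x hx z w₂.start_mem_support
  refine ⟨x, z, hxz, hyx, hyz, ?_, w₂.reachable_removeVertex hyw₂⟩
  exact w₁.reverse.reachable_removeVertex (by simpa [Walk.support_reverse] using hyw₁)

end

theorem cutvertex_iff_tree_neighbors_not_biconnected_general {V : Type*}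
    (G F : SimpleGraph V)
    (hFG : F ≤ G) (hFconn : F.Connected) (y : V) :
    IsCutVertex G y ↔
      ∃ x z : V, x ≠ z ∧ F.Adj y x ∧ F.Adj y z ∧ ¬ Biconnected G x z := by
  classical
  constructor
  · rintro ⟨a, b, hay, hby, -, hab⟩
    let p := (hFconn.preconnected a b).some.toPath
    have hy : y ∈ p.1.support := by
      by_contra hy
      exact hab <| (p.1.mapLe hFG).reachable_removeVertex <| by
        rwa [Walk.support_mapLe_eq_support]
    obtain ⟨x, z, hxz, hyx, hyz, hax, hzb⟩ := p.2.exists_adj_adj_of_mem_support hy hay hby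
    refine ⟨x, z, hxz, hyx, hyz, fun hbi => hab ?_⟩
    have hxz_reach :=
      (biconnected_iff_reachable_removeVertex (hFG hyx).symm (hFG hyz) hxz).1 hbi
    exact ((hax.mono (removeVertex_mono hFG y)).trans hxz_reach).trans
      (hzb.mono (removeVertex_mono hFG y))
  · rintro ⟨x, z, hxz, hyx, hyz, hnb⟩
    have hxy : G.Adj x y := (hFG hyx).symm
    have hyzG : G.Adj y z := hFG hyz
    exact ⟨x, z, hxy.ne, hyzG.ne.symm, hxy.reachable.trans hyzG.reachable,
      fun h => hnb ((biconnected_iff_reachable_removeVertex hxy hyzG hxz).2 h)⟩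

/-- Let `G` be a connected simple graph and let `F` be a spanning tree of `G`. A vertex `y`
is a cutvertex of `G` if and only if there exist two distinct vertices `x` and `z` that
are both adjacent to `y` in `F` and are not biconnected in `G`. -/
theorem cutvertex_iff_tree_neighbors_not_biconnected {V : Type*}
    (G F : SimpleGraph V) (hG : G.Connected)
    (hFG : F ≤ G) (hacyc : F.IsAcyclic) (hFconn : F.Connected) (y : V) :
    IsCutVertex G y ↔
      ∃ x z : V, x ≠ z ∧ F.Adj y x ∧ F.Adj y z ∧ ¬ Biconnected G x z :=
  cutvertex_iff_tree_neighbors_not_biconnected_general G F hFG hFconn y
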